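/- In the width-4 sector S, if the confinement of type-3 particles to R_S(3) is enforced, then type-0 particles remain automatically confined to R_S(0), even when direct flips between adjacent type-0 and type-3 particles are additionally allowed: starting from a configuration in S, any finite sequence of flips (including 0↔3 flips) that never moves a 3 outside R_S(3) also never moves a 0 outside R_S(0). -/

import Mathlib

/-!
Call the sites holding 0 or 3 *markers*. An ordinary flip never exchanges two markers (a 0 only
swaps with a 1, a 3 only with a 2), so the `m`-th marker keeps its value throughout a sector.
Moreover a 0 only ever moves across 1s, so the number of non-1 sites to its left is invariant,
and likewise the number of non-2 sites to the left of a 3. Since at every site `p` the numbers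
of non-1 and non-2 sites to its left add up to `p` plus the number of markers to its left, a site
holding a 0 in one configuration of a sector and a 3 in another yields contradictory inequalities
between the indices of the two markers involved. Hence `R_S(0)` and `R_S(3)` are disjoint, and a
0↔3 flip can never fire while the 3s stay in `R_S(3)`: it would move a 3 onto a site of `R_S(0)`.
So the constrained extended dynamics never leaves `S`.
-/

/-- A single flip: the values at two adjacent sites, which differ by exactly 1,
are swapped; all other sites are unchanged. -/
def FlipStep {N k : ℕ} (c c' : Fin N → Fin k) : Prop :=
  ∃ j j' : Fin N, j.val + 1 = j'.val ∧
    ((c j').val = (c j).val + 1 ∨ (c j).val = (c j').val + 1) ∧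
    c' j = c j' ∧ c' j' = c j ∧ ∀ i : Fin N, i ≠ j → i ≠ j' → c' i = c i

/-- Two configurations are in the same sector iff they are related by finitely many flips. -/
def SameSector {N k : ℕ} (c c' : Fin N → Fin k) : Prop :=
  Relation.ReflTransGen FlipStep c c'

/-- The region of confinement of type-`n` particles in the sector of `c`:
all sites that a type-`n` particle can occupy in some configuration of the sector. -/
def RoC {N k : ℕ} (c : Fin N → Fin k) (n : Fin k) : Set (Fin N) :=
  {j | ∃ c', SameSector c c' ∧ c' j = n}

/-- An extended flip: either an ordinary flip (adjacent values differing by 1) or a swap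
of adjacent values 0 and 3. -/
def ExtFlipStep {N : ℕ} (c c' : Fin N → Fin 4) : Prop :=
  ∃ j j' : Fin N, j.val + 1 = j'.val ∧
    ((c j').val = (c j).val + 1 ∨ (c j).val = (c j').val + 1 ∨
      (c j = 0 ∧ c j' = 3) ∨ (c j = 3 ∧ c j' = 0)) ∧
    c' j = c j' ∧ c' j' = c j ∧ ∀ i : Fin N, i ≠ j → i ≠ j' → c' i = c i


open Finset

section Counting

variable {N : ℕ} {α : Type*} (c : Fin N → α) (q : α → Prop) [DecidablePred q]

def countBefore (p : Fin N) : ℕ := #{i ∈ Iio p | q (c i)}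

lemma countBefore_add_card_Ico {p p' : Fin N} (h : p ≤ p') :
    countBefore c q p + #{i ∈ Ico p p' | q (c i)} = countBefore c q p' := by
  have hunion : Iio p ∪ Ico p p' = Iio p' :=
    coe_injective (by push_cast; exact Set.Iio_union_Ico_eq_Iio h)
  rw [countBefore, countBefore, ← hunion, filter_union, card_union_of_disjoint]
  exact disjoint_filter_filter <|
    disjoint_left.2 fun _ hi hi' => (mem_Iio.1 hi).not_ge (mem_Ico.1 hi').1

lemma countBefore_mono {p p' : Fin N} (h : p ≤ p') : countBefore c q p ≤ countBefore c q p' :=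
  (countBefore_add_card_Ico c q h).le.trans' (Nat.le_add_right _ _)

lemma lt_of_countBefore_lt {p p' : Fin N} (h : countBefore c q p < countBefore c q p') :
    p < p' :=
  lt_of_not_ge fun h' => h.not_ge (countBefore_mono c q h')

lemma countBefore_lt_of_lt {p p' : Fin N} (hp : q (c p)) (h : p < p') :
    countBefore c q p < countBefore c q p' := by
  have hpos : 0 < #{i ∈ Ico p p' | q (c i)} :=
    card_pos.2 ⟨p, mem_filter.2 ⟨mem_Ico.2 ⟨le_rfl, h⟩, hp⟩⟩
  have := countBefore_add_card_Ico c q h.le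
  omega

/-- Between `p` and `p'` the weaker predicate `r` gains at least as many sites as `q`. -/
lemma countBefore_add_le {r : α → Prop} [DecidablePred r] (hqr : ∀ a, q a → r a)
    {p p' : Fin N} (h : p ≤ p') :
    countBefore c q p' + countBefore c r p ≤ countBefore c r p' + countBefore c q p := by
  have hq := countBefore_add_card_Ico c q h
  have hr := countBefore_add_card_Ico c r h
  have hsub : #{i ∈ Ico p p' | q (c i)} ≤ #{i ∈ Ico p p' | r (c i)} :=
    card_le_card (monotone_filter_right _ fun _ _ => hqr _)
  omega

variable {c q}

lemma countBefore_congr {d : Fin N → α} {p : Fin N} (h : ∀ i < p, d i = c i) :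
    countBefore d q p = countBefore c q p := by
  refine congrArg card (filter_congr fun i hi => ?_)
  rw [h i (mem_Iio.1 hi)]

lemma countBefore_comp_swap {j j' p : Fin N} (h : j < p ↔ j' < p) :
    countBefore (c ∘ Equiv.swap j j') q p = countBefore c q p := by
  refine card_equiv (Equiv.swap j j') fun i => ?_
  have hlt : i < p ↔ Equiv.swap j j' i < p := by
    rcases eq_or_ne i j with rfl | hij
    · rw [Equiv.swap_apply_left]; exact h
    rcases eq_or_ne i j' with rfl | hij'
    · rw [Equiv.swap_apply_right]; exact h.symm
    · rw [Equiv.swap_apply_of_ne_of_ne hij hij']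
  simp only [mem_filter, mem_Iio, Function.comp_apply, hlt]

lemma countBefore_succ {d : Fin N → α} {j j' : Fin N} (hjj' : j.val + 1 = j'.val)
    (h : ∀ i < j, d i = c i) (hj : ¬ q (d j)) :
    countBefore d q j' = countBefore c q j := by
  have hIco : Ico j j' = {j} := by
    ext i
    simp only [mem_Ico, mem_singleton, Fin.le_def, Fin.lt_def, Fin.ext_iff]
    omega
  rw [← countBefore_add_card_Ico d q (show j ≤ j' from Fin.le_def.2 (by omega)), hIco,
    filter_singleton, if_neg hj, card_empty, add_zero, countBefore_congr h]

end Counting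

section Markers

variable {N : ℕ}

abbrev IsMarker (v : Fin 4) : Prop := v = 0 ∨ v = 3

/-- The only value a marker `v` can be swapped with by an ordinary flip. -/
def partner (v : Fin 4) : Fin 4 := if v = 0 then 1 else 2

lemma eq_partner_of_adjacent {v w : Fin 4} (hv : IsMarker v)
    (h : w.val = v.val + 1 ∨ v.val = w.val + 1) : w = partner v := by
  revert v w; decide

lemma not_isMarker_partner (v : Fin 4) : ¬ IsMarker (partner v) := by
  revert v; decide

lemma ne_partner_of_isMarker {v : Fin 4} (hv : IsMarker v) (w : Fin 4) : v ≠ partner w := by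
  revert v w; decide

lemma countBefore_partner_zero_add_partner_three (c : Fin N → Fin 4) (p : Fin N) :
    countBefore c (· ≠ partner 0) p + countBefore c (· ≠ partner 3) p =
      p + countBefore c IsMarker p := by
  have hsite : ∀ v : Fin 4,
      ((if v ≠ partner 0 then 1 else 0) + if v ≠ partner 3 then 1 else 0) =
        1 + if IsMarker v then 1 else 0 := by
    decide
  simp only [countBefore, card_filter, ← sum_add_distrib, hsite]
  simp [sum_add_distrib]

/-- The `m`-th marker of `c` has value `v` and is preceded by `φ` sites not holding
`partner v`; for a marker value `v` this is a sector invariant. -/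
def HasMarker (c : Fin N → Fin 4) (m : ℕ) (v : Fin 4) (φ : ℕ) : Prop :=
  ∃ p, c p = v ∧ countBefore c IsMarker p = m ∧ countBefore c (· ≠ partner v) p = φ

lemma FlipStep.symm {c c' : Fin N → Fin 4} (h : FlipStep c c') : FlipStep c' c := by
  obtain ⟨j, j', hjj', hadj, h1, h2, hrest⟩ := h
  exact ⟨j, j', hjj', by rw [h1, h2]; exact hadj.symm, h2.symm, h1.symm,
    fun i hi hi' => (hrest i hi hi').symm⟩

lemma FlipStep.hasMarker {c c' : Fin N → Fin 4} (hflip : FlipStep c c') {m : ℕ} {v : Fin 4}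
    {φ : ℕ} (hv : IsMarker v) (h : HasMarker c m v φ) : HasMarker c' m v φ := by
  obtain ⟨j, j', hjj', hadj, h1, h2, hrest⟩ := hflip
  obtain ⟨p, hpv, hm, hφ⟩ := h
  have hbelow : ∀ i < j, c' i = c i := fun i hi =>
    hrest i hi.ne (hi.trans (show j < j' from Fin.lt_def.2 (by omega))).ne
  have hnot : ¬ IsMarker (partner v) ∧ ¬ partner v ≠ partner v :=
    ⟨not_isMarker_partner v, not_not.2 rfl⟩
  rcases eq_or_ne j p with rfl | hpj
  · have hj' : c j' = partner v := eq_partner_of_adjacent hv (hpv ▸ hadj)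
    refine ⟨j', h2.trans hpv, ?_, ?_⟩
    · rwa [countBefore_succ hjj' hbelow (by rw [h1, hj']; exact hnot.1)]
    · rwa [countBefore_succ hjj' hbelow (by rw [h1, hj']; exact hnot.2)]
  rcases eq_or_ne j' p with rfl | hpj'
  · have hj : c j = partner v := eq_partner_of_adjacent hv (hpv ▸ hadj.symm)
    have habove : ∀ i < j, c i = c' i := fun i hi => (hbelow i hi).symm
    refine ⟨j, h1.trans hpv, ?_, ?_⟩
    · rwa [← countBefore_succ hjj' habove (by rw [hj]; exact hnot.1)]
    · rwa [← countBefore_succ hjj' habove (by rw [hj]; exact hnot.2)]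
  · have hswap : c' = c ∘ Equiv.swap j j' := by
      funext i
      rcases eq_or_ne i j with rfl | hij
      · simp [h1]
      rcases eq_or_ne i j' with rfl | hij'
      · simp [h2]
      · simp [Equiv.swap_apply_of_ne_of_ne hij hij', hrest i hij hij']
    have hside : j < p ↔ j' < p := by
      rw [Fin.lt_def, Fin.lt_def]
      have := Fin.val_ne_of_ne hpj.symm
      have := Fin.val_ne_of_ne hpj'.symm
      omega
    refine ⟨p, ?_, ?_, ?_⟩
    · rw [hswap, Function.comp_apply, Equiv.swap_apply_of_ne_of_ne hpj.symm hpj'.symm, hpv]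
    · rwa [hswap, countBefore_comp_swap hside]
    · rwa [hswap, countBefore_comp_swap hside]

lemma SameSector.symm {c c' : Fin N → Fin 4} (h : SameSector c c') : SameSector c' c := by
  induction h with
  | refl => exact .refl
  | tail _ hflip ih => exact ih.head hflip.symm

lemma SameSector.hasMarker {c c' : Fin N → Fin 4} (hs : SameSector c c') {m : ℕ} {v : Fin 4}
    {φ : ℕ} (hv : IsMarker v) (h : HasMarker c m v φ) : HasMarker c' m v φ := by
  induction hs with
  | refl => exact h
  | tail _ hflip ih => exact hflip.hasMarker hv ih

lemma SameSector.false_of_zero_of_three {c c' : Fin N → Fin 4} (hs : SameSector c c')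
    {j : Fin N} (h0 : c j = 0) (h3 : c' j = 3) : False := by
  obtain ⟨p', hp', hm', ha'⟩ :=
    hs.hasMarker (Or.inl rfl) (⟨j, h0, rfl, rfl⟩ : HasMarker c _ 0 _)
  obtain ⟨p, hp, hm, hb⟩ :=
    hs.symm.hasMarker (Or.inr rfl) (⟨j, h3, rfl, rfl⟩ : HasMarker c' _ 3 _)
  have hc := countBefore_partner_zero_add_partner_three c j
  have hc' := countBefore_partner_zero_add_partner_three c' j
  have hmarker : IsMarker (c p) := hp ▸ Or.inr rfl
  rcases lt_or_gt_of_ne (show p ≠ j by rintro rfl; simp [h0] at hp) with hpj | hjp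
  · have hlt := countBefore_lt_of_lt c IsMarker hmarker hpj
    have hjp' : j < p' := lt_of_countBefore_lt c' IsMarker (by omega)
    have := countBefore_add_le c IsMarker (fun _ hv => ne_partner_of_isMarker hv 3) hpj.le
    have := countBefore_add_le c' IsMarker (fun _ hv => ne_partner_of_isMarker hv 0) hjp'.le
    omega
  · have hlt := countBefore_lt_of_lt c IsMarker (h0 ▸ Or.inl rfl) hjp
    have hpj' : p' < j := lt_of_countBefore_lt c' IsMarker (by omega)
    have := countBefore_add_le c IsMarker (fun _ hv => ne_partner_of_isMarker hv 3) hjp.le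
    have := countBefore_add_le c' IsMarker (fun _ hv => ne_partner_of_isMarker hv 0) hpj'.le
    omega

theorem disjoint_roC_zero_three (c : Fin N → Fin 4) : Disjoint (RoC c 0) (RoC c 3) :=
  Set.disjoint_left.2 fun _ ⟨_, hs₀, h0⟩ ⟨_, hs₃, h3⟩ =>
    SameSector.false_of_zero_of_three (hs₀.symm.trans hs₃) h0 h3

lemma ExtFlipStep.flipStep_or_zero_to_three {c d : Fin N → Fin 4} (h : ExtFlipStep c d) :
    FlipStep c d ∨ ∃ j, c j = 0 ∧ d j = 3 := by
  obtain ⟨j, j', hjj', hcase, h1, h2, hrest⟩ := h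
  rcases hcase with hv | hv | ⟨h0, h3⟩ | ⟨h3, h0⟩
  · exact Or.inl ⟨j, j', hjj', Or.inl hv, h1, h2, hrest⟩
  · exact Or.inl ⟨j, j', hjj', Or.inr hv, h1, h2, hrest⟩
  · exact Or.inr ⟨j, h0, h1.trans h3⟩
  · exact Or.inr ⟨j', h0, h2.trans h3⟩

end Markers

/-- Automatic confinement of type-0 particles: starting from `c₀`, any finite sequence of
extended flips (including 0↔3 flips) in which every intermediate configuration keeps all
type-3 particles inside `R_S(3)` also keeps all type-0 particles inside `R_S(0)`. -/
theorem auto_confinement_type0 {N : ℕ} (c₀ : Fin N → Fin 4)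
    (c' : Fin N → Fin 4)
    (h : Relation.ReflTransGen
      (fun c d => ExtFlipStep c d ∧ ∀ j : Fin N, d j = 3 → j ∈ RoC c₀ 3) c₀ c') :
    ∀ j : Fin N, c' j = 0 → j ∈ RoC c₀ 0 := by
  have hsector : SameSector c₀ c' := by
    induction h with
    | refl => exact .refl
    | tail _ hstep ih =>
      obtain ⟨hext, hconfined⟩ := hstep
      rcases hext.flipStep_or_zero_to_three with hflip | ⟨j, h0, h3⟩
      · exact ih.tail hflip
      · exact (Set.disjoint_left.1 (disjoint_roC_zero_three c₀) ⟨_, ih, h0⟩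
          (hconfined j h3)).elim
  exact fun j hj => ⟨c', hsector, hj⟩
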